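/- There exist constants c₁, c₂, C > 0 such that for all reals κ₃, κ₄ with 0 < max(|κ₃|, |κ₄|) and |κ₃| ≤ c₁, |κ₄| ≤ c₁, setting n = ⌊c₂ κ₃^{−2}⌋ ∧ ⌊c₂ |κ₄|^{−1}⌋ ≥ 1, the assignment P(ξ = −2) = 1/12 + (−2√n κ₃ + n κ₄)/24, P(ξ = −1) = 1/6 + (√n κ₃ − n κ₄)/6, P(ξ = 0) = 1/2 + n κ₄/4, P(ξ = 1) = 1/6 − (√n κ₃ + n κ₄)/6, P(ξ = 2) = 1/12 + (2√n κ₃ + n κ₄)/24 defines a probability distribution on {−2, −1, 0, 1, 2}, and a random variable ξ with this distribution satisfies E[ξ] = 0, E[ξ²] = 1, the third cumulant κ₃(ξ) = √n κ₃, the fourth cumulant κ₄(ξ) = n κ₄, and E|ξ|⁵ ≤ C. -/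

import Mathlib

/-!
Write `a = √n κ₃` and `b = n κ₄`. The five masses are affine in `(a, b)`, sum to `1`, and a direct
computation gives the moments `0, 1, a, 3 + b` and `E |ξ|⁵ = (17 + 7 b) / 3`. The choice of `n`
forces `a² ≤ c₂` and `|b| ≤ c₂`, so for `c₂ = 1/4` we have `|a| + |b| ≤ 1`, which is enough to keep
every mass nonnegative. The integrals are computed through the law of `ξ`, which is a finite sum
of Dirac masses because the five masses already exhaust the total mass `1`.
-/

open MeasureTheory ProbabilityTheory

section FiniteLaw

variable {Ω α E : Type*} [MeasurableSpace Ω] [MeasurableSpace α] [MeasurableSingletonClass α]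
  [NormedAddCommGroup E] [NormedSpace ℝ E] [CompleteSpace E] {P : Measure Ω} {ξ : Ω → α}
  {s : Finset α}

lemma ae_mem_finset_of_sum_measure_preimage_eq_one [IsProbabilityMeasure P] (hξ : Measurable ξ)
    (hs : ∑ x ∈ s, P (ξ ⁻¹' {x}) = 1) : ∀ᵐ ω ∂P, ξ ω ∈ s := by
  rw [sum_measure_preimage_singleton s fun x _ ↦ hξ (measurableSet_singleton x)] at hs
  exact ae_iff.2 <| (prob_compl_eq_zero_iff (hξ s.measurableSet)).2 hs

lemma integral_comp_eq_sum_of_ae_mem_finset [IsFiniteMeasure P] (hξ : Measurable ξ)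
    (hs : ∀ᵐ ω ∂P, ξ ω ∈ s) (g : α → E) :
    ∫ ω, g (ξ ω) ∂P = ∑ x ∈ s, P.real (ξ ⁻¹' {x}) • g x := by
  have hg : ∀ x ∈ s, Integrable g (P (ξ ⁻¹' {x}) • Measure.dirac x) := fun x _ ↦
    (integrable_dirac enorm_lt_top).smul_measure (measure_ne_top _ _)
  have hmap := (Measure.ae_mem_finset_iff_map_eq_sum_dirac hξ.aemeasurable).1 hs
  rw [← integral_map hξ.aemeasurable, hmap, integral_finsetSum_measure hg]
  · simp [integral_smul_measure, measureReal_def]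
  · rw [hmap]
    exact (integrable_finsetSum_measure.2 hg).aestronglyMeasurable

end FiniteLaw

lemma integral_comp_eq_of_law_on_five_points {Ω : Type*} [MeasurableSpace Ω] {P : Measure Ω}
    [IsProbabilityMeasure P] {ξ : Ω → ℝ} (hξ : Measurable ξ) {p₀ p₁ p₂ p₃ p₄ : ℝ}
    (h₀ : 0 ≤ p₀) (h₁ : 0 ≤ p₁) (h₂ : 0 ≤ p₂) (h₃ : 0 ≤ p₃) (h₄ : 0 ≤ p₄)
    (hsum : p₀ + p₁ + p₂ + p₃ + p₄ = 1)
    (hP₀ : P {ω | ξ ω = -2} = ENNReal.ofReal p₀) (hP₁ : P {ω | ξ ω = -1} = ENNReal.ofReal p₁)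
    (hP₂ : P {ω | ξ ω = 0} = ENNReal.ofReal p₂) (hP₃ : P {ω | ξ ω = 1} = ENNReal.ofReal p₃)
    (hP₄ : P {ω | ξ ω = 2} = ENNReal.ofReal p₄) (g : ℝ → ℝ) :
    ∫ ω, g (ξ ω) ∂P = p₀ * g (-2) + p₁ * g (-1) + p₂ * g 0 + p₃ * g 1 + p₄ * g 2 := by
  have htotal : ∑ x ∈ ({-2, -1, 0, 1, 2} : Finset ℝ), P (ξ ⁻¹' {x}) = 1 := by
    norm_num [Finset.sum_insert, Set.preimage, hP₀, hP₁, hP₂, hP₃, hP₄]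
    rw [← ENNReal.ofReal_add h₃ h₄, ← ENNReal.ofReal_add h₂ (by positivity),
      ← ENNReal.ofReal_add h₁ (by positivity), ← ENNReal.ofReal_add h₀ (by positivity),
      ← ENNReal.ofReal_one, ← hsum]
    congr 1
    ring
  rw [integral_comp_eq_sum_of_ae_mem_finset hξ
    (ae_mem_finset_of_sum_measure_preimage_eq_one hξ htotal)]
  norm_num [Finset.sum_insert, Set.preimage, measureReal_def, hP₀, hP₁, hP₂, hP₃, hP₄, h₀, h₁, h₂,
    h₃, h₄]
  ring

namespace ENNReal

lemma toReal_mul_le_of_le_ofReal_div {e : ℝ≥0∞} {c x : ℝ} (hc : 0 ≤ c) (hx : 0 ≤ x)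
    (he : e ≤ ENNReal.ofReal c / ENNReal.ofReal x) : e.toReal * x ≤ c := by
  rw [← toReal_ofReal hx, ← toReal_mul]
  exact toReal_le_of_le_ofReal hc (mul_le_of_le_div he)

lemma one_le_ofReal_div_ofReal {c x : ℝ} (hc : 0 < c) (hxc : x ≤ c) :
    1 ≤ ENNReal.ofReal c / ENNReal.ofReal x := by
  rw [ENNReal.le_div_iff_mul_le (.inr (ofReal_pos.2 hc).ne') (.inr ofReal_ne_top), one_mul]
  exact ofReal_le_ofReal hxc

lemma one_le_toReal_min_ofReal_div {c x y : ℝ} (hc : 0 < c) (hxy : 0 < x ∨ 0 < y)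
    (hxc : x ≤ c) (hyc : y ≤ c) :
    1 ≤ (ENNReal.ofReal c / ENNReal.ofReal x ⊓ ENNReal.ofReal c / ENNReal.ofReal y).toReal := by
  have hne : ENNReal.ofReal c / ENNReal.ofReal x ⊓ ENNReal.ofReal c / ENNReal.ofReal y ≠ ∞ := by
    rcases hxy with hx | hy
    · exact ne_top_of_le_ne_top (ofReal_div_of_pos hx ▸ ofReal_ne_top) inf_le_left
    · exact ne_top_of_le_ne_top (ofReal_div_of_pos hy ▸ ofReal_ne_top) inf_le_right
  simpa using toReal_mono hne
    (le_inf (one_le_ofReal_div_ofReal hc hxc) (one_le_ofReal_div_ofReal hc hyc))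

end ENNReal

lemma five_point_masses_nonneg {a b : ℝ} (h : |a| + |b| ≤ 1) :
    0 ≤ 1 / 12 + (-2 * a + b) / 24 ∧ 0 ≤ 1 / 6 + (a - b) / 6 ∧ 0 ≤ 1 / 2 + b / 4 ∧
      0 ≤ 1 / 6 - (a + b) / 6 ∧ 0 ≤ 1 / 12 + (2 * a + b) / 24 := by
  refine ⟨?_, ?_, ?_, ?_, ?_⟩ <;>
    linarith [le_abs_self a, neg_abs_le a, le_abs_self b, neg_abs_le b]

lemma abs_sqrt_mul_add_abs_mul_le_one {n κ₃ κ₄ : ℝ} (hn : 0 ≤ n) (h₃ : n * κ₃ ^ 2 ≤ 1 / 4)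
    (h₄ : n * |κ₄| ≤ 1 / 4) : |Real.sqrt n * κ₃| + |n * κ₄| ≤ 1 := by
  have ha : |Real.sqrt n * κ₃| ^ 2 = n * κ₃ ^ 2 := by rw [sq_abs, mul_pow, Real.sq_sqrt hn]
  have hb : |n * κ₄| = n * |κ₄| := by rw [abs_mul, abs_of_nonneg hn]
  nlinarith [abs_nonneg (Real.sqrt n * κ₃)]

/-- Construction of the auxiliary five-point distribution: there are constants
`c₁, c₂, C > 0` such that for all reals `κ₃, κ₄`, not both zero, with `|κ₃| ≤ c₁` and
`|κ₄| ≤ c₁`, putting `n = ⌊c₂ κ₃⁻²⌋ ∧ ⌊c₂ |κ₄|⁻¹⌋ ≥ 1` (with the convention `1/0 = ∞`,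
realized below by computing the minimum in `ℝ≥0∞`), the displayed assignment of masses to
`{-2, -1, 0, 1, 2}` is a probability distribution, and any random variable `ξ` with this
distribution satisfies `E ξ = 0`, `E ξ² = 1`, `κ₃(ξ) = E ξ³ = √n κ₃`,
`κ₄(ξ) = E ξ⁴ - 3 = n κ₄`, and `E |ξ|⁵ ≤ C`. -/
theorem five_point_distribution :
    ∃ c₁ c₂ C : ℝ, 0 < c₁ ∧ 0 < c₂ ∧ 0 < C ∧
      ∀ κ₃ κ₄ : ℝ, 0 < max |κ₃| |κ₄| → |κ₃| ≤ c₁ → |κ₄| ≤ c₁ →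
      ∀ n : ℕ, n = ⌊((ENNReal.ofReal c₂ / ENNReal.ofReal (κ₃ ^ 2)) ⊓
          (ENNReal.ofReal c₂ / ENNReal.ofReal |κ₄|)).toReal⌋₊ →
        1 ≤ n ∧
        (0 ≤ 1 / 12 + (-2 * Real.sqrt n * κ₃ + n * κ₄) / 24 ∧
         0 ≤ 1 / 6 + (Real.sqrt n * κ₃ - n * κ₄) / 6 ∧
         0 ≤ 1 / 2 + n * κ₄ / 4 ∧
         0 ≤ 1 / 6 - (Real.sqrt n * κ₃ + n * κ₄) / 6 ∧
         0 ≤ 1 / 12 + (2 * Real.sqrt n * κ₃ + n * κ₄) / 24) ∧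
        (1 / 12 + (-2 * Real.sqrt n * κ₃ + n * κ₄) / 24) +
          (1 / 6 + (Real.sqrt n * κ₃ - n * κ₄) / 6) +
          (1 / 2 + n * κ₄ / 4) +
          (1 / 6 - (Real.sqrt n * κ₃ + n * κ₄) / 6) +
          (1 / 12 + (2 * Real.sqrt n * κ₃ + n * κ₄) / 24) = 1 ∧
        ∀ (Ω : Type) (_ : MeasurableSpace Ω) (P : Measure Ω)
          (_ : IsProbabilityMeasure P) (ξ : Ω → ℝ),
          Measurable ξ →
          P {ω | ξ ω = -2} =
            ENNReal.ofReal (1 / 12 + (-2 * Real.sqrt n * κ₃ + n * κ₄) / 24) →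
          P {ω | ξ ω = -1} =
            ENNReal.ofReal (1 / 6 + (Real.sqrt n * κ₃ - n * κ₄) / 6) →
          P {ω | ξ ω = 0} = ENNReal.ofReal (1 / 2 + n * κ₄ / 4) →
          P {ω | ξ ω = 1} =
            ENNReal.ofReal (1 / 6 - (Real.sqrt n * κ₃ + n * κ₄) / 6) →
          P {ω | ξ ω = 2} =
            ENNReal.ofReal (1 / 12 + (2 * Real.sqrt n * κ₃ + n * κ₄) / 24) →
          (∫ ω, ξ ω ∂P = 0 ∧ ∫ ω, ξ ω ^ 2 ∂P = 1 ∧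
            ∫ ω, ξ ω ^ 3 ∂P = Real.sqrt n * κ₃ ∧
            (∫ ω, ξ ω ^ 4 ∂P) - 3 = n * κ₄ ∧
            ∫ ω, |ξ ω| ^ 5 ∂P ≤ C) := by
  refine ⟨1 / 4, 1 / 4, 8, by norm_num, by norm_num, by norm_num, ?_⟩
  intro κ₃ κ₄ hmax h₃ h₄ n hn
  have hn₁ : 1 ≤ n := by
    rw [hn, Nat.one_le_floor_iff]
    refine ENNReal.one_le_toReal_min_ofReal_div (by norm_num) ?_ ?_ h₄
    · rcases lt_max_iff.1 hmax with h | h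
      · exact .inl (by simpa [sq_abs] using pow_pos h 2)
      · exact .inr h
    · nlinarith [abs_nonneg κ₃, sq_abs κ₃]
  have hn_le : (n : ℝ) ≤ _ := hn ▸ Nat.floor_le ENNReal.toReal_nonneg
  have hn₃ : n * κ₃ ^ 2 ≤ 1 / 4 := (mul_le_mul_of_nonneg_right hn_le (sq_nonneg κ₃)).trans
    (ENNReal.toReal_mul_le_of_le_ofReal_div (by norm_num) (sq_nonneg κ₃) inf_le_left)
  have hn₄ : n * |κ₄| ≤ 1 / 4 := (mul_le_mul_of_nonneg_right hn_le (abs_nonneg κ₄)).trans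
    (ENNReal.toReal_mul_le_of_le_ofReal_div (by norm_num) (abs_nonneg κ₄) inf_le_right)
  have hab := abs_sqrt_mul_add_abs_mul_le_one n.cast_nonneg hn₃ hn₄
  -- exposes `a = √n * κ₃` inside `±2 * √n * κ₃`
  simp only [mul_assoc]
  obtain ⟨hp₀, hp₁, hp₂, hp₃, hp₄⟩ := five_point_masses_nonneg hab
  refine ⟨hn₁, ⟨hp₀, hp₁, hp₂, hp₃, hp₄⟩, by ring, fun Ω _ P _ ξ hξ hP₀ hP₁ hP₂ hP₃ hP₄ ↦ ?_⟩
  have hint := integral_comp_eq_of_law_on_five_points hξ hp₀ hp₁ hp₂ hp₃ hp₄ (by ring)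
    hP₀ hP₁ hP₂ hP₃ hP₄
  refine ⟨(hint fun x ↦ x).trans (by ring), (hint fun x ↦ x ^ 2).trans (by ring),
    (hint fun x ↦ x ^ 3).trans (by ring), by rw [hint fun x ↦ x ^ 4]; ring, ?_⟩
  rw [hint fun x ↦ |x| ^ 5]
  norm_num
  linarith [le_abs_self ((n : ℝ) * κ₄), abs_nonneg (Real.sqrt n * κ₃)]
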